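/- arXiv:2605.07555 — 3 statements merged into one kernel-verified Lean document; each statement's English description precedes it below -/
import Mathlib

section
/- Let T be a triangulated category with countable coproducts, let T₀ → T₁ → T₂ → ⋯ be a sequence of objects and morphisms in T, and let M be its Milnor colimit, i.e. the cone of the morphism id − shift : ∐ᵢ Tᵢ → ∐ᵢ Tᵢ. Suppose X is an object with Hom(Tᵢ, X[n]) = 0 for all i ≥ 0 and all n > 0, and the inverse system of abelian groups Hom(Tᵢ, X) has all transition maps (induced by the fᵢ) surjective. Then Hom(M, X[n]) = 0 for all n > 0. -/
/-!
Applying `Hom(-, X⟦n⟧)` to the triangle `∐ Tᵢ → ∐ Tᵢ → M → (∐ Tᵢ)⟦1⟧` gives an exact sequence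
`Hom((∐ Tᵢ)⟦1⟧, X⟦n⟧) → Hom((∐ Tᵢ)⟦1⟧, X⟦n⟧) → Hom(M, X⟦n⟧) → Hom(∐ Tᵢ, X⟦n⟧) = 0`,
so it suffices that the first map, i.e. `id − shift` acting on `∏ᵢ Hom(Tᵢ, X⟦n - 1⟧)`, is onto.
For `n > 1` these groups vanish; for `n = 1` this is the vanishing of `lim¹ Hom(Tᵢ, X)`,
which holds because the transition maps are surjective: a preimage of `(tᵢ)` is built
recursively by lifting `gᵢ - tᵢ` along `f i`.
-/

open CategoryTheory Limits Pretriangulated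

section Sequence

variable {C : Type*} [Category C] {T : ℕ → C} (f : ∀ i, T i ⟶ T (i + 1))

lemma surjective_comp_of_iso {X Y : C} (e : X ≅ Y)
    (hsurj : ∀ i, Function.Surjective (fun g : T (i + 1) ⟶ X => f i ≫ g)) (i : ℕ) :
    Function.Surjective (fun g : T (i + 1) ⟶ Y => f i ≫ g) := by
  intro g
  obtain ⟨g', hg'⟩ := hsurj i (g ≫ e.inv)
  exact ⟨g' ≫ e.hom, by simp only at hg' ⊢; rw [reassoc_of% hg', e.inv_hom_id, Category.comp_id]⟩

variable [Preadditive C]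

lemma exists_sub_comp_succ_eq {X : C}
    (hsurj : ∀ i, Function.Surjective (fun g : T (i + 1) ⟶ X => f i ≫ g)) (t : ∀ i, T i ⟶ X) :
    ∃ g : ∀ i, T i ⟶ X, ∀ i, g i - f i ≫ g (i + 1) = t i := by
  choose lift hlift using hsurj
  let g : ∀ i, T i ⟶ X := fun i => Nat.rec 0 (fun i gi => lift i (gi - t i)) i
  refine ⟨g, fun i => ?_⟩
  change g i - f i ≫ lift i (g i - t i) = t i
  rw [show f i ≫ lift i (g i - t i) = g i - t i from hlift i _, sub_sub_cancel]

variable (T) [HasCoproduct T]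

noncomputable def milnorDiff : ∐ T ⟶ ∐ T :=
  Sigma.desc fun i => Sigma.ι T i - f i ≫ Sigma.ι T (i + 1)

@[simp]
lemma ι_milnorDiff (i : ℕ) :
    Sigma.ι T i ≫ milnorDiff T f = Sigma.ι T i - f i ≫ Sigma.ι T (i + 1) := by
  simp [milnorDiff]

lemma milnorDiff_comp_surjective {X : C}
    (hsurj : ∀ i, Function.Surjective (fun g : T (i + 1) ⟶ X => f i ≫ g)) :
    Function.Surjective (fun k : ∐ T ⟶ X => milnorDiff T f ≫ k) := by
  intro k
  obtain ⟨g, hg⟩ := exists_sub_comp_succ_eq f hsurj fun i => Sigma.ι T i ≫ k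
  refine ⟨Sigma.desc g, Sigma.hom_ext _ _ fun i => ?_⟩
  rw [← Category.assoc, ι_milnorDiff, Preadditive.sub_comp, Category.assoc]
  simpa using hg i

end Sequence

section Shift

variable {C : Type*} [Category C] [HasShift C ℤ]

lemma shift_map_comp_surjective {A B : C} (u : A ⟶ B) (a : ℤ) (Z : C)
    (hu : Function.Surjective (fun k : B ⟶ Z⟦-a⟧ => u ≫ k)) :
    Function.Surjective (fun h : B⟦a⟧ ⟶ Z => u⟦a⟧' ≫ h) := by
  let adj := (shiftEquiv C a).toAdjunction
  intro h
  obtain ⟨k, hk⟩ := hu (adj.homEquiv A Z h)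
  refine ⟨(adj.homEquiv B Z).symm k, ?_⟩
  exact (adj.homEquiv_naturality_left_symm u k).symm.trans ((Equiv.symm_apply_eq _).2 hk)

end Shift

lemma eq_zero_of_distTriang_of_comp_mor₂_eq_zero {C : Type*} [Category C] [Preadditive C]
    [HasZeroObject C] [HasShift C ℤ] [∀ n : ℤ, (shiftFunctor C n).Additive] [Pretriangulated C]
    {A B M Z : C} {u : A ⟶ B} {v : B ⟶ M} {w : M ⟶ A⟦(1 : ℤ)⟧}
    (hT : Triangle.mk u v w ∈ distTriang C) (g : M ⟶ Z) (hg : v ≫ g = 0)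
    (hu : Function.Surjective (fun h : B⟦(1 : ℤ)⟧ ⟶ Z => u⟦(1 : ℤ)⟧' ≫ h)) : g = 0 := by
  obtain ⟨h, rfl⟩ := Triangle.yoneda_exact₃ _ hT g hg
  obtain ⟨h', rfl⟩ := hu h
  change w ≫ u⟦(1 : ℤ)⟧' ≫ h' = 0
  rw [← Category.assoc, show w ≫ u⟦(1 : ℤ)⟧' = 0 from comp_distTriang_mor_zero₃₁ _ hT,
    zero_comp]

/-- Let `T₀ → T₁ → ⋯` be a sequence in a triangulated category with countable
coproducts and let `M` be its Milnor colimit, i.e. the cone of `id − shift : ∐ Tᵢ → ∐ Tᵢ`.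
If `X` satisfies `Hom(Tᵢ, X[n]) = 0` for all `i ≥ 0`, `n > 0`, and the inverse system
`Hom(Tᵢ, X)` has surjective transition maps, then `Hom(M, X[n]) = 0` for all `n > 0`. -/
theorem stmt_5 {C : Type*} [Category C] [Preadditive C] [HasZeroObject C]
    [HasShift C ℤ] [∀ n : ℤ, (shiftFunctor C n).Additive] [Pretriangulated C]
    [HasCountableCoproducts C]
    (T : ℕ → C) (f : ∀ i, T i ⟶ T (i + 1))
    (M : C) (π : (∐ T) ⟶ M) (δ : M ⟶ (∐ T)⟦(1 : ℤ)⟧)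
    -- `M` is the Milnor colimit: the cone of `id − (fᵢ)`
    (hM : Triangle.mk
        (Sigma.desc (fun i => Sigma.ι T i - (f i ≫ Sigma.ι T (i + 1)))) π δ ∈ distTriang C)
    (X : C)
    (hvan : ∀ (i : ℕ) (n : ℤ), 0 < n → ∀ g : T i ⟶ X⟦n⟧, g = 0)
    (hsurj : ∀ i : ℕ, Function.Surjective (fun g : T (i + 1) ⟶ X => f i ≫ g)) :
    ∀ n : ℤ, 0 < n → ∀ g : M ⟶ X⟦n⟧, g = 0 := by
  intro n hn g
  have hπg : π ≫ g = 0 := Sigma.hom_ext _ _ fun i => by simpa using hvan i n hn _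
  have hsurj' : ∀ i, Function.Surjective (fun g : T (i + 1) ⟶ X⟦n - 1⟧ => f i ≫ g) := by
    obtain rfl | hn1 : n = 1 ∨ 1 < n := by omega
    · exact surjective_comp_of_iso f ((shiftFunctorZero' C _ (sub_self 1)).app X).symm hsurj
    · exact fun i g => ⟨0, by simp [hvan i (n - 1) (by omega) g]⟩
  refine eq_zero_of_distTriang_of_comp_mor₂_eq_zero hM g hπg (shift_map_comp_surjective _ 1 _ ?_)
  exact milnorDiff_comp_surjective T f
    (surjective_comp_of_iso f ((shiftFunctorAdd' C n (-1) (n - 1) (by omega)).app X) hsurj')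
end

section
/- Let A be a finite-dimensional algebra over an algebraically closed field with real Grothendieck group K₀(proj A) ⊗ ℝ ≅ ℝˡ, and for θ ∈ ℝˡ define the numerical torsion class T̄_θ = { X ∈ mod A : θ(X') ≥ 0 for every quotient module X' of X } and F_θ = { X ∈ mod A : θ(X') < 0 for every nonzero submodule X' of X }. Then (T̄_θ, F_θ) is a torsion pair in mod A: Hom(T, F) = 0 for all T ∈ T̄_θ, F ∈ F_θ, and every module M fits in a short exact sequence 0 → T → M → F → 0 with T ∈ T̄_θ and F ∈ F_θ. -/
/-- The numerical torsion class `T̄_θ`: modules all of whose quotients have `θ`-value `≥ 0`. -/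
def NumTorsionClass (A : Type) [Ring A]
    (θ : (M : Type) → [AddCommGroup M] → [Module A M] → ℝ)
    (M : Type) [AddCommGroup M] [Module A M] : Prop :=
  ∀ (X' : Type) [AddCommGroup X'] [Module A X'] (p : M →ₗ[A] X'),
    Function.Surjective p → 0 ≤ θ X'

/-- The numerical torsion-free class `F_θ`: modules all of whose nonzero submodules have
`θ`-value `< 0`. -/
def NumTorsionFreeClass (A : Type) [Ring A]
    (θ : (M : Type) → [AddCommGroup M] → [Module A M] → ℝ)
    (M : Type) [AddCommGroup M] [Module A M] : Prop :=
  ∀ N : Submodule A M, N ≠ ⊥ → θ N < 0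

section Aux

variable {A : Type} [Ring A]
variable (θ : (M : Type) → [AddCommGroup M] → [Module A M] → ℝ)

/-- torsion class transfers along surjections -/
lemma numTorsion_of_surj {M N : Type} [AddCommGroup M] [Module A M]
    [AddCommGroup N] [Module A N] (hM : NumTorsionClass A θ M)
    (p : M →ₗ[A] N) (hp : Function.Surjective p) : NumTorsionClass A θ N := by
  intro X' _ _ q hq
  exact hM X' (q.comp p) (by simpa using hq.comp hp)

lemma theta_subsingleton
    (hiso : ∀ (M N : Type) [AddCommGroup M] [Module A M] [AddCommGroup N] [Module A N],
      (M ≃ₗ[A] N) → θ M = θ N)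
    (hadd : ∀ (M : Type) [AddCommGroup M] [Module A M] [Module.Finite A M]
      (N : Submodule A M), θ M = θ N + θ (M ⧸ N))
    (Z : Type) [AddCommGroup Z] [Module A Z] [Subsingleton Z] : θ Z = 0 := by
  have h := hadd Z (⊥ : Submodule A Z)
  have h1 : θ ((⊥ : Submodule A Z) : Type) = θ Z :=
    hiso _ _ (LinearEquiv.ofSubsingleton _ _)
  have h2 : θ ((Z ⧸ (⊥ : Submodule A Z)) : Type) = θ Z :=
    hiso _ _ (Submodule.quotEquivOfEqBot _ rfl)
  rw [h1, h2] at h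
  linarith

/-- torsion class is closed under extensions -/
lemma numTorsion_ext
    (hiso : ∀ (M N : Type) [AddCommGroup M] [Module A M] [AddCommGroup N] [Module A N],
      (M ≃ₗ[A] N) → θ M = θ N)
    (hadd : ∀ (M : Type) [AddCommGroup M] [Module A M] [Module.Finite A M]
      (N : Submodule A M), θ M = θ N + θ (M ⧸ N))
    {M : Type} [AddCommGroup M] [Module A M] [Module.Finite A M]
    (N : Submodule A M) (hN : NumTorsionClass A θ N)
    (hQ : NumTorsionClass A θ (M ⧸ N)) : NumTorsionClass A θ M := by
  intro X' _ _ p hp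
  haveI : Module.Finite A X' := Module.Finite.of_surjective p hp
  set K : Submodule A X' := N.map p with hK
  -- surjection N → K
  have hNK : 0 ≤ θ K := by
    refine hN K ((p.comp N.subtype).codRestrict K ?_) ?_
    · intro x; exact ⟨x, x.2, rfl⟩
    · rintro ⟨x, hx⟩
      obtain ⟨y, hy, rfl⟩ := hx
      exact ⟨⟨y, hy⟩, rfl⟩
  -- surjection M⧸N → X'⧸K
  have hle : N ≤ LinearMap.ker (K.mkQ.comp p) := by
    intro x hx
    simp only [LinearMap.mem_ker, LinearMap.comp_apply, Submodule.mkQ_apply,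
      Submodule.Quotient.mk_eq_zero]
    exact ⟨x, hx, rfl⟩
  have hQK : 0 ≤ θ (X' ⧸ K) := by
    refine hQ (X' ⧸ K) (N.liftQ (K.mkQ.comp p) hle) ?_
    intro z
    obtain ⟨x', rfl⟩ := K.mkQ_surjective z
    obtain ⟨m, rfl⟩ := hp x'
    exact ⟨Submodule.Quotient.mk m, rfl⟩
  have := hadd X' K
  linarith

end Aux

/-- Let `A` be a finite-dimensional algebra over an algebraically closed field
and let `θ` be (the linear form on `K₀(mod A) ⊗ ℝ` induced via the Euler form by) a vector in
`K₀(proj A) ⊗ ℝ` — equivalently, an isomorphism-invariant function on `mod A` that is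
additive on short exact sequences.  Then `(T̄_θ, F_θ)` is a torsion pair in `mod A`:
`Hom(T, F) = 0` for `T ∈ T̄_θ`, `F ∈ F_θ`, and every finite module `M` fits in a short exact
sequence `0 → T → M → M/T → 0` with `T ∈ T̄_θ` and `M/T ∈ F_θ`. -/
theorem stmt_10 {k A : Type} [Field k] [IsAlgClosed k] [Ring A] [Algebra k A]
    [FiniteDimensional k A]
    (θ : (M : Type) → [AddCommGroup M] → [Module A M] → ℝ)
    -- `θ` is isomorphism-invariant
    (hiso : ∀ (M N : Type) [AddCommGroup M] [Module A M] [AddCommGroup N] [Module A N],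
      (M ≃ₗ[A] N) → θ M = θ N)
    -- `θ` is additive on short exact sequences of finite modules
    (hadd : ∀ (M : Type) [AddCommGroup M] [Module A M] [Module.Finite A M]
      (N : Submodule A M), θ M = θ N + θ (M ⧸ N)) :
    -- no nonzero homomorphisms from torsion to torsion-free
    (∀ (M N : Type) [AddCommGroup M] [Module A M] [Module.Finite A M]
      [AddCommGroup N] [Module A N] [Module.Finite A N],
      NumTorsionClass A θ M → NumTorsionFreeClass A θ N → ∀ f : M →ₗ[A] N, f = 0) ∧
    -- every finite module is an extension of a torsion-free module by a torsion module
    (∀ (M : Type) [AddCommGroup M] [Module A M] [Module.Finite A M],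
      ∃ T : Submodule A M, NumTorsionClass A θ T ∧ NumTorsionFreeClass A θ (M ⧸ T)) := by
  constructor
  · -- Hom vanishing
    intro M N _ _ _ _ _ _ hM hN f
    rw [← LinearMap.range_eq_bot]
    by_contra hne
    have h1 : 0 ≤ θ (LinearMap.range f) :=
      hM _ f.rangeRestrict f.surjective_rangeRestrict
    have h2 : θ (LinearMap.range f) < 0 := hN _ hne
    linarith
  · -- existence of the torsion submodule
    intro M _ _ _
    letI : Module k M := Module.compHom M (algebraMap k A)
    haveI : IsScalarTower k A M := IsScalarTower.of_algebraMap_smul fun r x => rfl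
    haveI : Module.Finite k M := Module.Finite.trans A M
    haveI hNoeth : IsNoetherian A M := isNoetherian_of_tower k inferInstance
    haveI hArt : IsArtinian A M := isArtinian_of_tower k inferInstance
    -- maximal torsion submodule
    obtain ⟨T, hT, hTmax⟩ :=
      set_has_maximal_iff_noetherian.mpr hNoeth
        {N : Submodule A M | NumTorsionClass A θ N}
        ⟨⊥, by
          intro X' _ _ p hp
          haveI : Subsingleton X' := by
            constructor
            intro a b
            obtain ⟨x, rfl⟩ := hp a
            obtain ⟨y, rfl⟩ := hp b
            have : x = y := Subsingleton.elim x y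
            rw [this]
          rw [theta_subsingleton θ hiso hadd X']⟩
    refine ⟨T, hT, ?_⟩
    -- torsion-freeness of M ⧸ T
    by_contra hcon
    simp only [NumTorsionFreeClass, not_forall, not_lt] at hcon
    obtain ⟨N₀, hN₀ne, hN₀θ⟩ := hcon
    -- pick a minimal nonzero submodule of M⧸T with θ ≥ 0
    obtain ⟨N', ⟨hN'ne, hN'θ⟩, hN'min⟩ :=
      set_has_minimal_iff_artinian.mpr (inferInstance : IsArtinian A (M ⧸ T))
        {N : Submodule A (M ⧸ T) | N ≠ ⊥ ∧ 0 ≤ θ N} ⟨N₀, hN₀ne, hN₀θ⟩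
    haveI : Module.Finite A N' := Module.Finite.iff_fg.mpr (IsNoetherian.noetherian N')
    -- N' is a torsion module
    have hN'tors : NumTorsionClass A θ (N' : Type) := by
      intro X' _ _ p hp
      by_cases hkertop : LinearMap.ker p = ⊤
      · haveI : Subsingleton X' := by
          constructor
          intro a b
          obtain ⟨x, rfl⟩ := hp a
          obtain ⟨y, rfl⟩ := hp b
          have hx : p x = 0 := by
            have hmem : x ∈ LinearMap.ker p := by rw [hkertop]; trivial
            exact hmem
          have hy : p y = 0 := by
            have hmem : y ∈ LinearMap.ker p := by rw [hkertop]; trivial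
            exact hmem
          rw [hx, hy]
        rw [theta_subsingleton θ hiso hadd X']
      · have hquot : θ ((N' ⧸ LinearMap.ker p : Type)) = θ X' :=
          hiso _ _ (p.quotKerEquivOfSurjective hp)
        have hmain := hadd (N' : Type) (LinearMap.ker p)
        by_cases hkerbot : LinearMap.ker p = ⊥
        · have h0 : θ ((LinearMap.ker p : Submodule A N') : Type) = 0 := by
            haveI : Subsingleton (LinearMap.ker p : Submodule A N') := by
              rw [hkerbot]; infer_instance
            exact theta_subsingleton θ hiso hadd _
          rw [h0, hquot] at hmain
          linarith
        · set K : Submodule A (M ⧸ T) := (LinearMap.ker p).map N'.subtype with hKdef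
          have hKle : K ≤ N' := by
            rintro x ⟨y, _, rfl⟩; exact y.2
          have hKeq : θ ((LinearMap.ker p : Submodule A N') : Type) = θ (K : Type) :=
            hiso _ _ (Submodule.equivMapOfInjective N'.subtype N'.injective_subtype _)
          have hKne : K ≠ ⊥ := by
            intro hKbot
            apply hkerbot
            rw [Submodule.eq_bot_iff]
            intro x hx
            have hxK : (x : M ⧸ T) ∈ K := ⟨x, hx, rfl⟩
            rw [hKbot, Submodule.mem_bot] at hxK
            exact Subtype.ext hxK
          have hKneN' : K ≠ N' := by
            intro hKN
            apply hkertop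
            rw [Submodule.eq_top_iff']
            intro x
            have hxK : (x : M ⧸ T) ∈ K := by rw [hKN]; exact x.2
            obtain ⟨y, hy, hyx⟩ := hxK
            have hyeq : y = x := Subtype.ext hyx
            exact hyeq ▸ hy
          have hKlt : θ (K : Type) < 0 := by
            by_contra hge
            push_neg at hge
            exact hN'min K ⟨hKne, hge⟩ (lt_of_le_of_ne hKle hKneN')
          rw [hquot, hKeq] at hmain
          linarith
    -- lift N' back to M and contradict maximality of T
    set Nt : Submodule A M := N'.comap T.mkQ with hNtdef
    have hTle : T ≤ Nt := by
      intro x hx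
      show T.mkQ x ∈ N'
      have h0 : T.mkQ x = 0 := by
        rw [Submodule.mkQ_apply, Submodule.Quotient.mk_eq_zero]; exact hx
      rw [h0]; exact N'.zero_mem
    have hNttors : NumTorsionClass A θ (Nt : Type) := by
      haveI : Module.Finite A Nt := Module.Finite.iff_fg.mpr (IsNoetherian.noetherian Nt)
      refine numTorsion_ext θ hiso hadd (T.comap Nt.subtype) ?_ ?_
      · exact fun X' _ _ p hp =>
          hT X' (p.comp (Submodule.comapSubtypeEquivOfLe hTle).symm.toLinearMap)
            (by simpa using hp.comp (Submodule.comapSubtypeEquivOfLe hTle).symm.surjective)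
      · set q : Nt →ₗ[A] N' := (T.mkQ.comp Nt.subtype).codRestrict N' (fun x => x.2) with hq
        have hqsurj : Function.Surjective q := by
          rintro ⟨z, hz⟩
          obtain ⟨m, rfl⟩ := T.mkQ_surjective z
          exact ⟨⟨m, hz⟩, rfl⟩
        have hker : LinearMap.ker q = T.comap Nt.subtype := by
          ext x
          simp only [LinearMap.mem_ker, Submodule.mem_comap]
          constructor
          · intro h
            have h0 : T.mkQ (x : M) = 0 := congrArg Subtype.val h
            rwa [Submodule.mkQ_apply, Submodule.Quotient.mk_eq_zero] at h0
          · intro h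
            apply Subtype.ext
            show T.mkQ (x : M) = 0
            rw [Submodule.mkQ_apply, Submodule.Quotient.mk_eq_zero]
            exact h
        have hiso2 : ((Nt : Type) ⧸ T.comap Nt.subtype) ≃ₗ[A] N' :=
          hker ▸ q.quotKerEquivOfSurjective hqsurj
        exact numTorsion_of_surj θ hN'tors hiso2.symm.toLinearMap hiso2.symm.surjective
    have hTlt : T < Nt := by
      refine lt_of_le_of_ne hTle ?_
      intro h
      apply hN'ne
      rw [Submodule.eq_bot_iff]
      intro z hz
      obtain ⟨m, rfl⟩ := T.mkQ_surjective z
      have hm : m ∈ Nt := hz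
      rw [← h] at hm
      rw [Submodule.mkQ_apply, Submodule.Quotient.mk_eq_zero]
      exact hm
    exact hTmax Nt hNttors hTlt
end

section
/- Let A be a finite-dimensional algebra, θ ∈ K₀(proj A) ⊗ ℝ, and let (θⁱ)_{i∈ℕ} be a sequence in K₀(proj A) ⊗ ℝ with θ ≤ θⁱ for all i and lim_{i→∞} θⁱ = θ (componentwise in ℝˡ). Then T̄_θ = ⋂_{i∈ℕ} T̄_{θⁱ}. -/
open Filter Topology

/-- Let `A` be a finite-dimensional algebra, `θ ∈ K₀(proj A) ⊗ ℝ`, and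
`(θⁱ)_{i∈ℕ}` a sequence with `θ ≤ θⁱ` for all `i` (i.e. each `θⁱ − θ` is a nonnegative
real combination of classes of projectives, so via the Euler form
`θⁱ(X) − θ(X) = Σⱼ cⱼ · dim_k Hom(Pⱼ, X)` with `cⱼ ≥ 0` and `Pⱼ` projective) and
`lim_{i→∞} θⁱ = θ` (so the values `θⁱ(X)` converge to `θ(X)`).
Then `T̄_θ = ⋂_{i∈ℕ} T̄_{θⁱ}`. -/
theorem stmt_13 {k A : Type} [Field k] [Ring A] [Algebra k A] [FiniteDimensional k A]
    (θ : (M : Type) → [AddCommGroup M] → [Module A M] → ℝ)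
    (θi : ℕ → (M : Type) → [AddCommGroup M] → [Module A M] → ℝ)
    -- `θ ≤ θⁱ` for every `i`
    (hle : ∀ n : ℕ, ∃ (l : ℕ) (P : Fin l → Type) (_ : ∀ j, AddCommGroup (P j))
      (_ : ∀ j, Module A (P j)) (_ : ∀ j, Module.Projective A (P j))
      (_ : ∀ j, Module.Finite A (P j)) (c : Fin l → ℝ) (_ : ∀ j, 0 ≤ c j),
      ∀ (M : Type) [AddCommGroup M] [Module k M] [Module A M] [IsScalarTower k A M]
        [SMulCommClass A k M] [Module.Finite A M],
        θi n M - θ M = ∑ j, c j * (Module.finrank k (P j →ₗ[A] M) : ℝ))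
    -- `lim_{i→∞} θⁱ = θ`
    (hlim : ∀ (M : Type) [AddCommGroup M] [Module A M] [Module.Finite A M],
      Tendsto (fun n : ℕ => θi n M) atTop (nhds (θ M))) :
    ∀ (M : Type) [AddCommGroup M] [Module k M] [Module A M] [IsScalarTower k A M]
      [SMulCommClass A k M] [Module.Finite A M],
      NumTorsionClass A θ M ↔ ∀ n : ℕ, NumTorsionClass A (θi n) M := by
  intro M _ _ _ _ _ _
  constructor
  · intro h n X' _ _ p hp
    -- put a compatible `k`-module structure on `X'`
    letI : Module k X' := Module.compHom X' (algebraMap k A)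
    haveI : IsScalarTower k A X' := ⟨fun c a x => by
      show (c • a) • x = algebraMap k A c • a • x
      rw [Algebra.smul_def, mul_smul]⟩
    haveI : SMulCommClass A k X' := ⟨fun a c x => by
      show a • algebraMap k A c • x = algebraMap k A c • a • x
      rw [← mul_smul, ← mul_smul, Algebra.commutes]⟩
    haveI : Module.Finite A X' := Module.Finite.of_surjective p hp
    obtain ⟨l, P, _, _, _, _, c, hc, hE⟩ := hle n
    have hsum : 0 ≤ ∑ j, c j * (Module.finrank k (P j →ₗ[A] X') : ℝ) :=
      Finset.sum_nonneg fun j _ => mul_nonneg (hc j) (Nat.cast_nonneg _)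
    have := hE X'
    have h0 := h X' p hp
    linarith
  · intro h X' _ _ p hp
    haveI : Module.Finite A X' := Module.Finite.of_surjective p hp
    exact ge_of_tendsto' (hlim X') fun n => h n X' p hp
end
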